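/- Suppose f ∈ H has the (a,δ)-stable approximation property with 0 < δ < 1 and a > 0, and let c > a²/(1−δ). Then the ASVD1 approximation satisfies ‖f − P_Λ f‖ ≤ (δ + max{a√ε, a²δ/(c(1−δ) − a²)}) ‖f‖. -/

import Mathlib

open scoped ComplexInnerProductSpace

/-!
The vectors `ξ n = T (v n)` are orthogonal with `‖ξ n‖² = σ n`, so `P_Λ f` is the sum of the
projections of `f` onto the lines `ℂ ξ n`, `n ∈ Λ`, and is the best approximation to `f` from
their span. Expanding `z` in the basis `v` gives `T z = ∑ ⟪v n, z⟫ ξ n`; its part over `Λ` is a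
competitor, and the discarded part has norm at most `M ‖z‖` once `√σ n ≤ M` off `Λ`. For
`σ n ≤ ε` take `M = √ε`. Otherwise the ratio `|⟪ξ n, f⟫| / σ n` exceeds
`c ‖y‖ ≥ c (1 - δ) ‖f‖ / a`, while `|⟪ξ n, f⟫| ≤ √σ n δ ‖f‖ + a ‖f‖ σ n`, which forces
`√σ n ≤ a δ / (c (1 - δ) - a²)`.
-/

open scoped InnerProductSpace
open Finset

section Synthesis

variable {𝕜 ι κ H : Type*} [RCLike 𝕜] [NormedAddCommGroup H] [InnerProductSpace 𝕜 H] [Fintype ι]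

theorem inner_sum_smul_left_eq_inner {φ : ι → H} {f : H} {y : EuclideanSpace 𝕜 ι}
    (hy : ∀ i, y i = ⟪φ i, f⟫_𝕜) (u : EuclideanSpace 𝕜 ι) :
    ⟪∑ i, u i • φ i, f⟫_𝕜 = ⟪u, y⟫_𝕜 := by
  simp_rw [sum_inner, inner_smul_left, PiLp.inner_apply, RCLike.inner_apply, hy, mul_comm]

theorem inner_sum_smul_eigenvector [DecidableEq κ] {φ : ι → H} {G : Matrix ι ι 𝕜}
    (hG : ∀ m k, G m k = ⟪φ m, φ k⟫_𝕜) {v : κ → EuclideanSpace 𝕜 ι} (hv : Orthonormal 𝕜 v)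
    {σ : κ → ℝ} (heig : ∀ n i, G.mulVec (fun j => v n j) i = (σ n : 𝕜) * v n i) (m n : κ) :
    ⟪∑ i, v m i • φ i, ∑ i, v n i • φ i⟫_𝕜 = if m = n then (σ n : 𝕜) else 0 := by
  have hy : ∀ i, ((σ n : 𝕜) • v n) i = ⟪φ i, ∑ j, v n j • φ j⟫_𝕜 := fun i => by
    simp_rw [PiLp.smul_apply, smul_eq_mul, ← heig, inner_sum, inner_smul_right, ← hG,
      Matrix.mulVec, dotProduct, mul_comm]
  rw [inner_sum_smul_left_eq_inner hy, inner_smul_right, orthonormal_iff_ite.mp hv, mul_ite,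
    mul_one, mul_zero]

theorem sum_smul_sum_smul [Fintype κ] (φ : ι → H) (u : κ → 𝕜) (w : κ → EuclideanSpace 𝕜 ι) :
    ∑ i, (∑ n, u n • w n) i • φ i = ∑ n, u n • ∑ i, w n i • φ i := by
  simp_rw [WithLp.ofLp_sum, Finset.sum_apply, WithLp.ofLp_smul, Pi.smul_apply, smul_eq_mul,
    sum_smul, smul_sum, smul_smul]
  exact sum_comm

theorem one_sub_mul_norm_le_mul_norm {E : Type*} [NormedAddCommGroup E] [InnerProductSpace 𝕜 E]
    {f g : H} {z y : E} {a δ : ℝ} (ha : 0 ≤ a) (hgz : ⟪g, f⟫_𝕜 = ⟪z, y⟫_𝕜)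
    (hfit : ‖f - g‖ ≤ δ * ‖f‖) (hz : ‖z‖ ≤ a * ‖f‖) :
    (1 - δ) * ‖f‖ ≤ a * ‖y‖ := by
  have h : ‖f‖ * ‖f‖ ≤ ‖f‖ * (δ * ‖f‖ + a * ‖y‖) :=
    calc ‖f‖ * ‖f‖ = RCLike.re ⟪f - g, f⟫_𝕜 + RCLike.re ⟪z, y⟫_𝕜 := by
          rw [← hgz, ← map_add, ← inner_add_left, sub_add_cancel,
            ← inner_self_eq_norm_mul_norm (𝕜 := 𝕜)]
      _ ≤ ‖f - g‖ * ‖f‖ + ‖z‖ * ‖y‖ := add_le_add (re_inner_le_norm _ _) (re_inner_le_norm _ _)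
      _ ≤ δ * ‖f‖ * ‖f‖ + a * ‖f‖ * ‖y‖ := by gcongr
      _ = ‖f‖ * (δ * ‖f‖ + a * ‖y‖) := by ring
  rcases (norm_nonneg f).eq_or_lt with hf | hf
  · rw [← hf, mul_zero]; positivity
  · nlinarith [le_of_mul_le_mul_left h hf]

end Synthesis

section DiagonalGram

variable {𝕜 ι H : Type*} [RCLike 𝕜] [NormedAddCommGroup H] [InnerProductSpace 𝕜 H]
  [DecidableEq ι] {ξ : ι → H} {σ : ι → ℝ}

theorem inner_sum_smul_of_gram (hξ : ∀ m n, ⟪ξ m, ξ n⟫_𝕜 = if m = n then (σ n : 𝕜) else 0)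
    (s : Finset ι) (c : ι → 𝕜) (m : ι) :
    ⟪ξ m, ∑ n ∈ s, c n • ξ n⟫_𝕜 = if m ∈ s then c m * σ m else 0 := by
  simp_rw [inner_sum, inner_smul_right, hξ, mul_ite, mul_zero]
  exact sum_ite_eq s m _

theorem norm_sq_of_gram (hξ : ∀ m n, ⟪ξ m, ξ n⟫_𝕜 = if m = n then (σ n : 𝕜) else 0) (n : ι) :
    ‖ξ n‖ ^ 2 = σ n := by
  rw [← inner_self_eq_norm_sq (𝕜 := 𝕜), hξ, if_pos rfl, RCLike.ofReal_re]

theorem nonneg_of_gram (hξ : ∀ m n, ⟪ξ m, ξ n⟫_𝕜 = if m = n then (σ n : 𝕜) else 0) (n : ι) :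
    0 ≤ σ n :=
  norm_sq_of_gram hξ n ▸ sq_nonneg _

theorem norm_sum_smul_sq_of_gram (hξ : ∀ m n, ⟪ξ m, ξ n⟫_𝕜 = if m = n then (σ n : 𝕜) else 0)
    (s : Finset ι) (c : ι → 𝕜) :
    ‖∑ n ∈ s, c n • ξ n‖ ^ 2 = ∑ n ∈ s, ‖c n‖ ^ 2 * σ n := by
  rw [← inner_self_eq_norm_sq (𝕜 := 𝕜), sum_inner, map_sum]
  refine sum_congr rfl fun m hm => ?_
  rw [inner_smul_left, inner_sum_smul_of_gram hξ, if_pos hm, ← mul_assoc, RCLike.conj_mul]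
  norm_cast

theorem inner_sub_sum_inner_div_smul_eq_zero
    (hξ : ∀ m n, ⟪ξ m, ξ n⟫_𝕜 = if m = n then (σ n : 𝕜) else 0)
    (s : Finset ι) (f : H) {m : ι} (hm : m ∈ s) :
    ⟪ξ m, f - ∑ n ∈ s, (⟪ξ n, f⟫_𝕜 / σ n) • ξ n⟫_𝕜 = 0 := by
  rw [inner_sub_right, inner_sum_smul_of_gram hξ, if_pos hm]
  rcases eq_or_ne (σ m) 0 with h | h
  · have : ξ m = 0 := by rw [← norm_eq_zero, ← sq_eq_zero_iff, norm_sq_of_gram hξ, h]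
    simp [this]
  · rw [div_mul_cancel₀ _ (by exact_mod_cast h), sub_self]

theorem norm_sub_sum_inner_div_smul_le
    (hξ : ∀ m n, ⟪ξ m, ξ n⟫_𝕜 = if m = n then (σ n : 𝕜) else 0)
    (s : Finset ι) (f : H) (c : ι → 𝕜) :
    ‖f - ∑ n ∈ s, (⟪ξ n, f⟫_𝕜 / σ n) • ξ n‖ ≤ ‖f - ∑ n ∈ s, c n • ξ n‖ := by
  set p := ∑ n ∈ s, (⟪ξ n, f⟫_𝕜 / σ n) • ξ n
  have horth : ⟪f - p, p - ∑ n ∈ s, c n • ξ n⟫_𝕜 = 0 := by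
    rw [← sum_sub_distrib, inner_sum]
    refine sum_eq_zero fun n hn => ?_
    rw [← sub_smul, inner_smul_right,
      inner_eq_zero_symm.mp (inner_sub_sum_inner_div_smul_eq_zero hξ s f hn), mul_zero]
  have hpyth := norm_add_sq_eq_norm_sq_add_norm_sq_of_inner_eq_zero _ _ horth
  rw [sub_add_sub_cancel] at hpyth
  exact (mul_self_le_mul_self_iff (norm_nonneg _) (norm_nonneg _)).mpr
    (hpyth ▸ le_add_of_nonneg_right (mul_self_nonneg _))

theorem norm_sum_smul_le_of_gram [Fintype ι]
    (hξ : ∀ m n, ⟪ξ m, ξ n⟫_𝕜 = if m = n then (σ n : 𝕜) else 0)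
    (s : Finset ι) (b : EuclideanSpace 𝕜 ι) {M : ℝ} (hM : 0 ≤ M) (hσ : ∀ n ∈ s, √(σ n) ≤ M) :
    ‖∑ n ∈ s, b n • ξ n‖ ≤ M * ‖b‖ := by
  refine (pow_le_pow_iff_left₀ (norm_nonneg _) (by positivity) two_ne_zero).mp ?_
  calc ‖∑ n ∈ s, b n • ξ n‖ ^ 2 = ∑ n ∈ s, ‖b n‖ ^ 2 * σ n := norm_sum_smul_sq_of_gram hξ s b
    _ ≤ ∑ n ∈ s, ‖b n‖ ^ 2 * M ^ 2 :=
        sum_le_sum fun n hn => by gcongr; exact (Real.sqrt_le_left hM).mp (hσ n hn)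
    _ ≤ ∑ n, ‖b n‖ ^ 2 * M ^ 2 :=
        sum_le_sum_of_subset_of_nonneg (subset_univ s) (by intros; positivity)
    _ = (M * ‖b‖) ^ 2 := by rw [← sum_mul, mul_pow, EuclideanSpace.norm_sq_eq]; ring

theorem norm_inner_le_of_gram [Fintype ι]
    (hξ : ∀ m n, ⟪ξ m, ξ n⟫_𝕜 = if m = n then (σ n : 𝕜) else 0)
    (f : H) (b : ι → 𝕜) (n : ι) :
    ‖⟪ξ n, f⟫_𝕜‖ ≤ √(σ n) * ‖f - ∑ m, b m • ξ m‖ + ‖b n‖ * σ n := by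
  have hσ := nonneg_of_gram hξ n
  calc ‖⟪ξ n, f⟫_𝕜‖ = ‖⟪ξ n, f - ∑ m, b m • ξ m⟫_𝕜 + ⟪ξ n, ∑ m, b m • ξ m⟫_𝕜‖ := by
        rw [← inner_add_right, sub_add_cancel]
    _ ≤ ‖ξ n‖ * ‖f - ∑ m, b m • ξ m‖ + ‖b n * σ n‖ := by
        rw [inner_sum_smul_of_gram hξ, if_pos (mem_univ n)]
        exact norm_add_le_of_le (norm_inner_le_norm _ _) le_rfl
    _ = √(σ n) * ‖f - ∑ m, b m • ξ m‖ + ‖b n‖ * σ n := by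
        rw [norm_mul, RCLike.norm_ofReal, abs_of_nonneg hσ, ← norm_sq_of_gram hξ n,
          Real.sqrt_sq (norm_nonneg _)]

end DiagonalGram

theorem sqrt_le_of_mul_lt_of_le_add {σ t F Y a δ c : ℝ} (hσ : 0 ≤ σ) (hF : 0 ≤ F) (ha : 0 < a)
    (hδ1 : δ < 1) (hc : a ^ 2 / (1 - δ) < c) (hY : (1 - δ) * F ≤ a * Y)
    (hlow : c * Y * σ < t) (hup : t ≤ √σ * (δ * F) + a * F * σ) :
    √σ ≤ a * δ / (c * (1 - δ) - a ^ 2) := by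
  have hD : 0 < c * (1 - δ) - a ^ 2 := by
    have := (div_lt_iff₀ (sub_pos.mpr hδ1)).mp hc
    linarith
  set s := √σ
  have hs : 0 ≤ s := Real.sqrt_nonneg σ
  have hσs : σ = s ^ 2 := (Real.sq_sqrt hσ).symm
  have hc0 : 0 ≤ c := (div_nonneg (sq_nonneg a) (sub_pos.mpr hδ1).le).trans hc.le
  -- `c (1 - δ) F σ ≤ c a Y σ < a t ≤ a δ F s + a² F σ`; then cancel `s F`, which is `> 0`
  have key : s * F * (s * (c * (1 - δ) - a ^ 2)) < s * F * (a * δ) := by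
    have h1 : c * ((1 - δ) * F) * σ ≤ c * (a * Y) * σ := by gcongr
    have h2 : a * (c * Y * σ) < a * (s * (δ * F) + a * F * σ) :=
      mul_lt_mul_of_pos_left (hlow.trans_le hup) ha
    rw [hσs] at h1 h2
    nlinarith
  have hsF : 0 < s * F := by
    by_contra! h
    have : s * F = 0 := le_antisymm h (mul_nonneg hs hF)
    simp [this] at key
  have : s * (c * (1 - δ) - a ^ 2) < a * δ := lt_of_mul_lt_mul_left key hsF.le
  rw [le_div_iff₀ hD]
  exact this.le

theorem norm_sub_sum_inner_div_smul_le_of_stable {𝕜 ι H : Type*} [RCLike 𝕜]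
    [NormedAddCommGroup H] [InnerProductSpace 𝕜 H] [Fintype ι] [DecidableEq ι]
    {ξ : ι → H} {σ : ι → ℝ} (hξ : ∀ m n, ⟪ξ m, ξ n⟫_𝕜 = if m = n then (σ n : 𝕜) else 0)
    {f : H} {b : EuclideanSpace 𝕜 ι} {a δ c ε Y : ℝ} (ha : 0 < a) (hδ1 : δ < 1)
    (hc : a ^ 2 / (1 - δ) < c) (hfit : ‖f - ∑ n, b n • ξ n‖ ≤ δ * ‖f‖)
    (hb : ‖b‖ ≤ a * ‖f‖) (hY : (1 - δ) * ‖f‖ ≤ a * Y) (Λ : Finset ι)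
    (hΛ : ∀ n ∉ Λ, σ n ≤ ε ∨ c * Y * σ n < ‖⟪ξ n, f⟫_𝕜‖) :
    ‖f - ∑ n ∈ Λ, (⟪ξ n, f⟫_𝕜 / σ n) • ξ n‖ ≤
      (δ + max (a * √ε) (a ^ 2 * δ / (c * (1 - δ) - a ^ 2))) * ‖f‖ := by
  set M := max √ε (a * δ / (c * (1 - δ) - a ^ 2))
  have hM : 0 ≤ M := (Real.sqrt_nonneg ε).trans (le_max_left _ _)
  have hσM : ∀ n ∈ Λᶜ, √(σ n) ≤ M := by
    intro n hn
    rcases hΛ n (mem_compl.mp hn) with hσε | hbig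
    · exact (Real.sqrt_le_sqrt hσε).trans (le_max_left _ _)
    · have hup : ‖⟪ξ n, f⟫_𝕜‖ ≤ √(σ n) * (δ * ‖f‖) + a * ‖f‖ * σ n := by
        have hσ := nonneg_of_gram hξ n
        refine (norm_inner_le_of_gram hξ f b n).trans ?_
        gcongr
        exact (PiLp.norm_apply_le b n).trans hb
      exact (sqrt_le_of_mul_lt_of_le_add (nonneg_of_gram hξ n) (norm_nonneg f) ha hδ1 hc hY hbig
        hup).trans (le_max_right _ _)
  calc ‖f - ∑ n ∈ Λ, (⟪ξ n, f⟫_𝕜 / σ n) • ξ n‖ ≤ ‖f - ∑ n ∈ Λ, b n • ξ n‖ :=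
        norm_sub_sum_inner_div_smul_le hξ Λ f b
    _ = ‖(f - ∑ n, b n • ξ n) + ∑ n ∈ Λᶜ, b n • ξ n‖ := by
        rw [← sum_add_sum_compl Λ]; abel_nf
    _ ≤ δ * ‖f‖ + M * (a * ‖f‖) :=
        norm_add_le_of_le hfit
          ((norm_sum_smul_le_of_gram hξ Λᶜ b hM hσM).trans (mul_le_mul_of_nonneg_left hb hM))
    _ = (δ + max (a * √ε) (a ^ 2 * δ / (c * (1 - δ) - a ^ 2))) * ‖f‖ := by
        rw [show a ^ 2 * δ / (c * (1 - δ) - a ^ 2) = a * (a * δ / (c * (1 - δ) - a ^ 2)) by ring,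
          ← mul_max_of_nonneg _ _ ha.le]
        ring

theorem stmt_15_general {H : Type*} [NormedAddCommGroup H] [InnerProductSpace ℂ H]
    {N : ℕ} (φ : Fin N → H) (σ : Fin N → ℝ)
    (v : Fin N → EuclideanSpace ℂ (Fin N)) (hv : Orthonormal ℂ v)
    (G : Matrix (Fin N) (Fin N) ℂ) (hG : ∀ m k, G m k = ⟪φ m, φ k⟫)
    (heig : ∀ n i, G.mulVec (fun j => v n j) i = (σ n : ℂ) * v n i)
    (T : EuclideanSpace ℂ (Fin N) → H) (hT : ∀ z, T z = ∑ n, z n • φ n)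
    (ξ : Fin N → H) (hξ : ∀ n, ξ n = T (v n))
    (ε c : ℝ) (hε : 0 < ε)
    (f : H) (y : EuclideanSpace ℂ (Fin N)) (hy : ∀ n, y n = ⟪φ n, f⟫)
    (a δ : ℝ) (ha : 0 < a) (hδ1 : δ < 1)
    (hc : a ^ 2 / (1 - δ) < c)
    (hstable : ∃ z : EuclideanSpace ℂ (Fin N),
      ‖f - T z‖ ≤ δ * ‖f‖ ∧ ‖z‖ ≤ a * ‖f‖) :
    ‖f - ∑ n ∈ Finset.univ.filter (fun n => ε < σ n ∧ ‖⟪v n, y⟫‖ / σ n ≤ c * ‖y‖),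
        (⟪ξ n, f⟫ / (σ n : ℂ)) • ξ n‖ ≤
      (δ + max (a * Real.sqrt ε) (a ^ 2 * δ / (c * (1 - δ) - a ^ 2))) * ‖f‖ := by
  obtain ⟨z, hfit, hz⟩ := hstable
  have hgram : ∀ m n, ⟪ξ m, ξ n⟫ = if m = n then (σ n : ℂ) else 0 := fun m n => by
    rw [hξ, hξ, hT, hT]
    exact inner_sum_smul_eigenvector hG hv heig m n
  have hξf : ∀ n, ⟪ξ n, f⟫ = ⟪v n, y⟫ := fun n => by
    rw [hξ, hT]
    exact inner_sum_smul_left_eq_inner hy (v n)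
  let B := OrthonormalBasis.mk hv
    (hv.linearIndependent.span_eq_top_of_card_eq_finrank' (by simp)).ge
  have hTz : T z = ∑ n, B.repr z n • ξ n := by
    conv_lhs => rw [← B.sum_repr z]
    simp only [hT, hξ, OrthonormalBasis.coe_mk, B, sum_smul_sum_smul]
  have hY : (1 - δ) * ‖f‖ ≤ a * ‖y‖ :=
    one_sub_mul_norm_le_mul_norm ha.le (by rw [hT]; exact inner_sum_smul_left_eq_inner hy z)
      hfit hz
  refine norm_sub_sum_inner_div_smul_le_of_stable hgram ha hδ1 hc (hTz ▸ hfit)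
    (B.repr.norm_map z ▸ hz) hY _ fun n hn => ?_
  simp only [mem_filter, mem_univ, true_and, not_and, not_le] at hn
  rcases le_or_gt (σ n) ε with hσε | hεσ
  · exact Or.inl hσε
  · have hbig := hn hεσ
    rw [lt_div_iff₀ (hε.trans hεσ), ← hξf] at hbig
    exact Or.inr hbig

theorem stmt_15 {H : Type*} [NormedAddCommGroup H] [InnerProductSpace ℂ H]
    {N : ℕ} (φ : Fin N → H) (σ : Fin N → ℝ)
    (v : Fin N → EuclideanSpace ℂ (Fin N)) (hv : Orthonormal ℂ v)
    (G : Matrix (Fin N) (Fin N) ℂ) (hG : ∀ m k, G m k = ⟪φ m, φ k⟫)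
    (heig : ∀ n i, G.mulVec (fun j => v n j) i = (σ n : ℂ) * v n i)
    (T : EuclideanSpace ℂ (Fin N) → H) (hT : ∀ z, T z = ∑ n, z n • φ n)
    (ξ : Fin N → H) (hξ : ∀ n, ξ n = T (v n))
    (hσ : ∀ n, 0 ≤ σ n) (ε c : ℝ) (hε : 0 < ε)
    (f : H) (y : EuclideanSpace ℂ (Fin N)) (hy : ∀ n, y n = ⟪φ n, f⟫)
    (a δ : ℝ) (ha : 0 < a) (hδ0 : 0 < δ) (hδ1 : δ < 1)
    (hc : a ^ 2 / (1 - δ) < c)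
    (hstable : ∃ z : EuclideanSpace ℂ (Fin N),
      ‖f - T z‖ ≤ δ * ‖f‖ ∧ ‖z‖ ≤ a * ‖f‖) :
    ‖f - ∑ n ∈ Finset.univ.filter (fun n => ε < σ n ∧ ‖⟪v n, y⟫‖ / σ n ≤ c * ‖y‖),
        (⟪ξ n, f⟫ / (σ n : ℂ)) • ξ n‖ ≤
      (δ + max (a * Real.sqrt ε) (a ^ 2 * δ / (c * (1 - δ) - a ^ 2))) * ‖f‖ :=
  stmt_15_general φ σ v hv G hG heig T hT ξ hξ ε c hε f y hy a δ ha hδ1 hc hstable
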